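/- For every integer n ≥ 3, the Lebesgue measure of D_n^* = {(x_1,...,x_n) ∈ [0,1]^n : x_1 = min(x_1,...,x_n) and x_i + x_{i+1} < 1 for all i = 1,...,n (indices mod n)} equals A_{n-1} / (2n · (n−1)!), where A_{n-1} is the number of up-down alternating permutations of length n−1. -/

import Mathlib

open MeasureTheory

/-- The number of up-down alternating permutations of {1,...,m}:
permutations σ with σ(1) < σ(2) > σ(3) < σ(4) > ⋯ (1-indexed). -/
def upDownCount (m : ℕ) : ℕ :=
  (Finset.univ.filter (fun σ : Equiv.Perm (Fin m) =>
    ∀ i j : Fin m, (j : ℕ) = (i : ℕ) + 1 →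
      (if (i : ℕ) % 2 = 0 then σ i < σ j else σ j < σ i))).card

open MeasureTheory Set

variable {m : ℕ}

/-- Region of the open unit cube where the coordinates are ordered according to `σ`. -/
def Creg (σ : Equiv.Perm (Fin m)) : Set (Fin m → ℝ) :=
  {u | (∀ i, u i ∈ Set.Ioo (0:ℝ) 1) ∧ StrictMono (u ∘ σ)}

lemma measurableSet_pointwise {p : Fin m → ℝ → Prop}
    (h : ∀ i, MeasurableSet {r : ℝ | p i r}) :
    MeasurableSet {u : Fin m → ℝ | ∀ i, p i (u i)} := by
  have : {u : Fin m → ℝ | ∀ i, p i (u i)} = ⋂ i, (fun u : Fin m → ℝ => u i) ⁻¹' {r | p i r} := by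
    ext u; simp
  rw [this]
  exact MeasurableSet.iInter fun i => (measurable_pi_apply i) (h i)

lemma measurableSet_Creg (σ : Equiv.Perm (Fin m)) : MeasurableSet (Creg σ) := by
  have h1 : MeasurableSet {u : Fin m → ℝ | ∀ i, u i ∈ Set.Ioo (0:ℝ) 1} :=
    measurableSet_pointwise fun i => measurableSet_Ioo
  have h2 : MeasurableSet {u : Fin m → ℝ | StrictMono (u ∘ σ)} := by
    have : {u : Fin m → ℝ | StrictMono (u ∘ σ)} =
        ⋂ (a : Fin m), ⋂ (b : Fin m), ⋂ (_ : a < b), {u : Fin m → ℝ | u (σ a) < u (σ b)} := by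
      ext u; simp [StrictMono, Function.comp]
    rw [this]
    exact MeasurableSet.iInter fun a => MeasurableSet.iInter fun b => MeasurableSet.iInter
      fun _ => measurableSet_lt (measurable_pi_apply _) (measurable_pi_apply _)
  exact h1.inter h2

lemma injective_of_mem_Creg {σ : Equiv.Perm (Fin m)} {u : Fin m → ℝ} (hu : u ∈ Creg σ) :
    Function.Injective u := by
  intro a b hab
  have h2 : Function.Injective (u ∘ σ) := hu.2.injective
  have : (u ∘ σ) (σ.symm a) = (u ∘ σ) (σ.symm b) := by
    simpa [Function.comp] using hab
  have := h2 this
  simpa using congrArg σ this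

lemma Creg_disjoint : Pairwise (Function.onFun Disjoint (Creg (m := m))) := by
  intro σ τ hne
  rw [Function.onFun, Set.disjoint_left]
  intro u huσ huτ
  have hinj : Function.Injective u := injective_of_mem_Creg huσ
  have hr : Set.range (u ∘ σ) = Set.range (u ∘ τ) := by
    rw [σ.surjective.range_comp, τ.surjective.range_comp]
  have hwf : WellFoundedLT (Fin m) := inferInstance
  have : u ∘ ⇑σ = u ∘ ⇑τ := (StrictMono.range_inj huσ.2 huτ.2).mp hr
  exact hne (Equiv.ext fun a => hinj (congrFun this a))

lemma vol_Creg_eq (σ : Equiv.Perm (Fin m)) : volume (Creg σ) = volume (Creg (m := m) 1) := by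
  have hmp := volume_measurePreserving_piCongrLeft (fun _ : Fin m => ℝ) σ.symm
  have happ : ∀ (v : Fin m → ℝ) (j : Fin m),
      (MeasurableEquiv.piCongrLeft (fun _ : Fin m => ℝ) σ.symm) v j = v (σ j) := by
    intro v j
    have h := Equiv.piCongrLeft_apply_apply (fun _ : Fin m => ℝ) σ.symm v (σ j)
    simpa [MeasurableEquiv.piCongrLeft] using h
  have key : Creg σ = (MeasurableEquiv.piCongrLeft (fun _ : Fin m => ℝ) σ.symm) ⁻¹' (Creg 1) := by
    ext u
    simp only [Creg, Set.mem_preimage, Set.mem_setOf_eq]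
    constructor
    · rintro ⟨h1, h2⟩
      refine ⟨fun i => ?_, ?_⟩
      · rw [happ]; exact h1 _
      · have : (MeasurableEquiv.piCongrLeft (fun _ : Fin m => ℝ) σ.symm) u ∘ ⇑(1 : Equiv.Perm (Fin m))
            = u ∘ σ := by
          funext j; simp [happ]
        rw [this]; exact h2
    · rintro ⟨h1, h2⟩
      refine ⟨fun i => ?_, ?_⟩
      · have := h1 (σ.symm i); rw [happ] at this; simpa using this
      · have : (MeasurableEquiv.piCongrLeft (fun _ : Fin m => ℝ) σ.symm) u ∘ ⇑(1 : Equiv.Perm (Fin m))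
            = u ∘ σ := by
          funext j; simp [happ]
        rwa [this] at h2
  rw [key]
  exact hmp.measure_preimage (measurableSet_Creg 1).nullMeasurableSet
variable {m : ℕ}

lemma vol_hyperplane (i j : Fin m) (hij : i ≠ j) :
    volume {x : Fin m → ℝ | x i = x j} = 0 := by
  have h : {x : Fin m → ℝ | x i = x j} =
      (LinearMap.ker ((LinearMap.proj i : (Fin m → ℝ) →ₗ[ℝ] ℝ) - LinearMap.proj j) : Set (Fin m → ℝ)) := by
    ext x
    simp [LinearMap.mem_ker, sub_eq_zero, eq_comm]
  rw [h]
  refine Measure.addHaar_submodule _ _ (fun htop => ?_)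
  have h1 : (Pi.single i 1 : Fin m → ℝ) ∈
      LinearMap.ker ((LinearMap.proj i : (Fin m → ℝ) →ₗ[ℝ] ℝ) - LinearMap.proj j) := by
    rw [htop]; trivial
  rw [LinearMap.mem_ker, LinearMap.sub_apply, LinearMap.proj_apply, LinearMap.proj_apply] at h1
  rw [Pi.single_eq_same, Pi.single_eq_of_ne (Ne.symm hij)] at h1
  norm_num at h1

lemma vol_coord_eq (i : Fin m) (c : ℝ) : volume {x : Fin m → ℝ | x i = c} = 0 := by
  have h : {x : Fin m → ℝ | x i = c} =
      Set.pi Set.univ (fun j => if j = i then {c} else Set.univ) := by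
    ext x
    simp only [Set.mem_setOf_eq, Set.mem_pi, Set.mem_univ, forall_true_left]
    constructor
    · intro hx j
      by_cases hj : j = i <;> simp [hj, hx]
    · intro hx
      have := hx i; simpa using this
  rw [h, volume_pi_pi]
  exact Finset.prod_eq_zero (Finset.mem_univ i) (by simp)

lemma vol_noninj : volume {x : Fin m → ℝ | ¬ Function.Injective x} = 0 := by
  have hsub : {x : Fin m → ℝ | ¬ Function.Injective x} ⊆
      ⋃ (p : Fin m × Fin m), ⋃ (_ : p.1 ≠ p.2), {x : Fin m → ℝ | x p.1 = x p.2} := by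
    intro x hx
    simp only [Function.Injective, not_forall] at hx
    obtain ⟨a, b, hab, hne⟩ := hx
    exact Set.mem_iUnion.mpr ⟨(a, b), Set.mem_iUnion.mpr ⟨hne, hab⟩⟩
  refine measure_mono_null hsub ?_
  refine measure_iUnion_null fun p => measure_iUnion_null fun hp => vol_hyperplane _ _ hp

lemma vol_boundary : volume {x : Fin m → ℝ | ∃ i, x i = 0 ∨ x i = 1} = 0 := by
  have hsub : {x : Fin m → ℝ | ∃ i, x i = 0 ∨ x i = 1} ⊆
      ⋃ (i : Fin m), ({x : Fin m → ℝ | x i = 0} ∪ {x : Fin m → ℝ | x i = 1}) := by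
    intro x hx
    obtain ⟨i, hi⟩ := hx
    exact Set.mem_iUnion.mpr ⟨i, hi.imp (fun h => h) (fun h => h)⟩
  refine measure_mono_null hsub (measure_iUnion_null fun i => ?_)
  exact measure_union_null (vol_coord_eq i 0) (vol_coord_eq i 1)

lemma vol_cube : volume {u : Fin m → ℝ | ∀ i, u i ∈ Set.Ioo (0:ℝ) 1} = 1 := by
  have h : {u : Fin m → ℝ | ∀ i, u i ∈ Set.Ioo (0:ℝ) 1} =
      Set.pi Set.univ (fun _ : Fin m => Set.Ioo (0:ℝ) 1) := by
    ext u; simp [Set.mem_pi]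
  rw [h, volume_pi_pi]
  simp [Real.volume_Ioo]

lemma vol_Creg_val (σ : Equiv.Perm (Fin m)) :
    volume (Creg σ) = ((Nat.factorial m : ENNReal))⁻¹ := by
  have hsum : ∑ τ : Equiv.Perm (Fin m), volume (Creg τ) = 1 := by
    have hU : volume (⋃ τ : Equiv.Perm (Fin m), Creg τ) = ∑' τ, volume (Creg τ) :=
      measure_iUnion Creg_disjoint (fun τ => measurableSet_Creg τ)
    rw [tsum_fintype] at hU
    rw [← hU]
    apply le_antisymm
    · calc volume (⋃ τ : Equiv.Perm (Fin m), Creg τ)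
          ≤ volume {u : Fin m → ℝ | ∀ i, u i ∈ Set.Ioo (0:ℝ) 1} := by
            refine measure_mono (Set.iUnion_subset fun τ u hu => hu.1)
        _ = 1 := vol_cube
    · have hcov : {u : Fin m → ℝ | ∀ i, u i ∈ Set.Ioo (0:ℝ) 1} ⊆
          (⋃ τ : Equiv.Perm (Fin m), Creg τ) ∪ {x : Fin m → ℝ | ¬ Function.Injective x} := by
        intro u hu
        by_cases hinj : Function.Injective u
        · left
          refine Set.mem_iUnion.mpr ⟨Tuple.sort u, hu, ?_⟩
          exact (Tuple.monotone_sort u).strictMono_of_injective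
            (hinj.comp (Tuple.sort u).injective)
        · right; exact hinj
      calc (1 : ENNReal) = volume {u : Fin m → ℝ | ∀ i, u i ∈ Set.Ioo (0:ℝ) 1} := vol_cube.symm
        _ ≤ volume ((⋃ τ : Equiv.Perm (Fin m), Creg τ) ∪ {x : Fin m → ℝ | ¬ Function.Injective x}) :=
            measure_mono hcov
        _ ≤ volume (⋃ τ : Equiv.Perm (Fin m), Creg τ) + volume {x : Fin m → ℝ | ¬ Function.Injective x} :=
            measure_union_le _ _
        _ = volume (⋃ τ : Equiv.Perm (Fin m), Creg τ) := by rw [vol_noninj, add_zero]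
  have hconst : ∑ τ : Equiv.Perm (Fin m), volume (Creg τ)
      = (Nat.factorial m : ENNReal) * volume (Creg (m := m) 1) := by
    calc ∑ τ : Equiv.Perm (Fin m), volume (Creg τ)
        = ∑ _τ : Equiv.Perm (Fin m), volume (Creg (m := m) 1) :=
          Finset.sum_congr rfl fun τ _ => vol_Creg_eq τ
      _ = (Fintype.card (Equiv.Perm (Fin m)) : ENNReal) * volume (Creg (m := m) 1) := by
          rw [Finset.sum_const, Finset.card_univ, nsmul_eq_mul]
      _ = (Nat.factorial m : ENNReal) * volume (Creg (m := m) 1) := by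
          rw [Fintype.card_perm, Fintype.card_fin]
  have key : (Nat.factorial m : ENNReal) * volume (Creg (m := m) 1) = 1 := by
    rw [← hconst, hsum]
  have h0 : (Nat.factorial m : ENNReal) ≠ 0 := by
    simp [Nat.factorial_ne_zero]
  have htop : (Nat.factorial m : ENNReal) ≠ ⊤ := ENNReal.natCast_ne_top _
  have h1 : volume (Creg (m := m) 1) = ((Nat.factorial m : ENNReal))⁻¹ := by
    rw [← one_mul (volume (Creg (m := m) 1)), ← ENNReal.inv_mul_cancel h0 htop, mul_assoc, key,
      mul_one]
  rw [vol_Creg_eq σ, h1]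

def AltChain {α : Type*} [LT α] (u : Fin m → α) : Prop :=
  ∀ i j : Fin m, (j : ℕ) = (i : ℕ) + 1 →
    (if (i : ℕ) % 2 = 0 then u i < u j else u j < u i)

/-- The "up-down alternating" subset of the cube. -/
def Tset (m : ℕ) : Set (Fin m → ℝ) :=
  {u | (∀ i : Fin m, if (i : ℕ) % 2 = 0 then u i ∈ Set.Ico (0:ℝ) 1 else u i ∈ Set.Ioc (0:ℝ) 1)
    ∧ AltChain u}

lemma measurableSet_Tset : MeasurableSet (Tset m) := by
  have h1 : MeasurableSet {u : Fin m → ℝ |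
      ∀ i : Fin m, if (i : ℕ) % 2 = 0 then u i ∈ Set.Ico (0:ℝ) 1 else u i ∈ Set.Ioc (0:ℝ) 1} := by
    refine measurableSet_pointwise (p := fun (i : Fin m) (r : ℝ) => if (i : ℕ) % 2 = 0 then r ∈ Set.Ico (0:ℝ) 1 else r ∈ Set.Ioc (0:ℝ) 1) fun i => ?_
    by_cases h : (i : ℕ) % 2 = 0
    · simp only [h, if_true]; exact measurableSet_Ico
    · simp only [h, if_false]; exact measurableSet_Ioc
  have h2 : MeasurableSet {u : Fin m → ℝ | AltChain u} := by
    have : {u : Fin m → ℝ | AltChain u} = ⋂ (i : Fin m), ⋂ (j : Fin m),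
        ⋂ (_ : (j : ℕ) = (i : ℕ) + 1),
          (if (i : ℕ) % 2 = 0 then {u : Fin m → ℝ | u i < u j} else {u : Fin m → ℝ | u j < u i}) := by
      ext u
      simp only [AltChain, Set.mem_setOf_eq, Set.mem_iInter]
      refine forall_congr' fun i => forall_congr' fun j => forall_congr' fun h => ?_
      by_cases hp : (i : ℕ) % 2 = 0 <;> simp [hp]
    rw [this]
    refine MeasurableSet.iInter fun i => MeasurableSet.iInter fun j => MeasurableSet.iInter fun _ => ?_
    by_cases hp : (i : ℕ) % 2 = 0 <;>
      simp only [hp, if_true, if_false] <;>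
      exact measurableSet_lt (measurable_pi_apply _) (measurable_pi_apply _)
  exact h1.inter h2

lemma altChain_iff_of_strictMono {σ : Equiv.Perm (Fin m)} {u : Fin m → ℝ}
    (h : StrictMono (u ∘ σ)) :
    AltChain u ↔ AltChain (fun i : Fin m => σ.symm i) := by
  have key : ∀ i j : Fin m, u i < u j ↔ σ.symm i < σ.symm j := by
    intro i j
    have h2 := h.lt_iff_lt (a := σ.symm i) (b := σ.symm j)
    simpa [Function.comp, Equiv.apply_symm_apply] using h2
  unfold AltChain
  refine forall_congr' fun i => forall_congr' fun j => forall_congr' fun hij => ?_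
  by_cases hp : (i : ℕ) % 2 = 0 <;> simp only [hp, if_true, if_false] <;> exact key _ _

instance AltChain.decidable {m : ℕ} {α : Type*} [LT α] [DecidableRel (α := α) (· < ·)] (u : Fin m → α) :
    Decidable (AltChain u) := by
  unfold AltChain; infer_instance

lemma vol_Tset :
    volume (Tset m) = ((Finset.univ.filter
        (fun σ : Equiv.Perm (Fin m) => AltChain (fun i => σ.symm i))).card : ENNReal)
      * ((Nat.factorial m : ENNReal))⁻¹ := by
  classical
  set A := Finset.univ.filter
    (fun σ : Equiv.Perm (Fin m) => AltChain (fun i => σ.symm i)) with hA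
  have hlower : (⋃ σ ∈ A, Creg σ) ⊆ Tset m := by
    intro u hu
    simp only [Set.mem_iUnion] at hu
    obtain ⟨σ, hσA, huσ⟩ := hu
    have hσ : AltChain (fun i => σ.symm i) := by
      have := Finset.mem_filter.mp (hA ▸ hσA)
      exact this.2
    refine ⟨fun i => ?_, (altChain_iff_of_strictMono huσ.2).mpr hσ⟩
    have hio := huσ.1 i
    by_cases hp : (i : ℕ) % 2 = 0
    · simp only [hp, if_true]; exact ⟨hio.1.le, hio.2⟩
    · simp only [hp, if_false]; exact ⟨hio.1, hio.2.le⟩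
  have hupper : Tset m ⊆ (⋃ σ ∈ A, Creg σ) ∪
      ({x : Fin m → ℝ | ¬ Function.Injective x} ∪ {x : Fin m → ℝ | ∃ i, x i = 0 ∨ x i = 1}) := by
    intro u hu
    by_cases hinj : Function.Injective u
    · by_cases hbd : ∃ i, u i = 0 ∨ u i = 1
      · right; right; exact hbd
      · left
        push_neg at hbd
        have hsm : StrictMono (u ∘ (Tuple.sort u)) :=
          (Tuple.monotone_sort u).strictMono_of_injective (hinj.comp (Tuple.sort u).injective)
        have hcube : ∀ i, u i ∈ Set.Ioo (0:ℝ) 1 := by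
          intro i
          have h1 := hu.1 i
          have h2 := hbd i
          by_cases hp : (i : ℕ) % 2 = 0
          · rw [if_pos hp] at h1; exact ⟨lt_of_le_of_ne h1.1 (Ne.symm h2.1), h1.2⟩
          · rw [if_neg hp] at h1; exact ⟨h1.1, lt_of_le_of_ne h1.2 h2.2⟩
        have hmemA : Tuple.sort u ∈ A := by
          rw [hA, Finset.mem_filter]
          exact ⟨Finset.mem_univ _, (altChain_iff_of_strictMono hsm).mp hu.2⟩
        exact Set.mem_iUnion.mpr ⟨Tuple.sort u,
          Set.mem_iUnion.mpr ⟨hmemA, ⟨hcube, hsm⟩⟩⟩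
    · right; left; exact hinj
  have hUvol : volume (⋃ σ ∈ A, Creg σ) = (A.card : ENNReal) * ((Nat.factorial m : ENNReal))⁻¹ := by
    rw [measure_biUnion_finset (fun σ _ τ _ hne => Creg_disjoint hne)
      (fun σ _ => measurableSet_Creg σ)]
    rw [Finset.sum_congr rfl fun σ _ => vol_Creg_val σ, Finset.sum_const, nsmul_eq_mul]
  apply le_antisymm
  · calc volume (Tset m)
        ≤ volume ((⋃ σ ∈ A, Creg σ) ∪
          ({x : Fin m → ℝ | ¬ Function.Injective x} ∪ {x : Fin m → ℝ | ∃ i, x i = 0 ∨ x i = 1})) :=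
          measure_mono hupper
      _ ≤ volume (⋃ σ ∈ A, Creg σ) +
          volume ({x : Fin m → ℝ | ¬ Function.Injective x} ∪ {x : Fin m → ℝ | ∃ i, x i = 0 ∨ x i = 1}) :=
          measure_union_le _ _
      _ = (A.card : ENNReal) * ((Nat.factorial m : ENNReal))⁻¹ := by
          rw [measure_union_null vol_noninj vol_boundary, add_zero, hUvol]
  · rw [← hUvol]; exact measure_mono hlower

/-- The coordinatewise flip. -/
def flipMap (m : ℕ) (z : Fin m → ℝ) : Fin m → ℝ :=
  fun i => if (i : ℕ) % 2 = 0 then z i else 1 - z i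

lemma flipMap_preserving : MeasurePreserving (flipMap m) volume volume := by
  have h := volume_preserving_pi
    (f := fun (i : Fin m) => if (i : ℕ) % 2 = 0 then (fun r : ℝ => r) else (fun r : ℝ => 1 - r))
    (fun i => by
      by_cases hp : (i : ℕ) % 2 = 0
      · rw [if_pos hp]; exact MeasurePreserving.id _
      · rw [if_neg hp]; exact Measure.measurePreserving_sub_left volume 1)
  have heq : (fun (a : Fin m → ℝ) (i : Fin m) =>
      (if (i : ℕ) % 2 = 0 then (fun r : ℝ => r) else (fun r : ℝ => 1 - r)) (a i)) = flipMap m := by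
    funext a i
    by_cases hp : (i : ℕ) % 2 = 0 <;> simp [flipMap, hp]
  rwa [heq] at h

/-- The chain set: nonneg coordinates, each `< 1`, consecutive sums `< 1`. -/
def Sset (m : ℕ) : Set (Fin m → ℝ) :=
  {z | (∀ i, z i ∈ Set.Ico (0:ℝ) 1) ∧ ∀ i j : Fin m, (j : ℕ) = (i : ℕ) + 1 → z i + z j < 1}

lemma Sset_eq_preimage : Sset m = flipMap m ⁻¹' (Tset m) := by
  ext z
  simp only [Sset, Tset, Set.mem_preimage, Set.mem_setOf_eq, flipMap, AltChain]
  constructor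
  · rintro ⟨h1, h2⟩
    constructor
    · intro i
      by_cases hp : (i : ℕ) % 2 = 0
      · simp only [hp, if_true]; exact h1 i
      · simp only [hp, if_false]
        have := h1 i
        exact ⟨by linarith [this.2], by linarith [this.1]⟩
    · intro i j hij
      have hsum := h2 i j hij
      by_cases hp : (i : ℕ) % 2 = 0
      · have hjp : ¬ ((j : ℕ) % 2 = 0) := by omega
        simp only [hp, hjp, if_true, if_false]
        linarith
      · have hjp : (j : ℕ) % 2 = 0 := by omega
        simp only [hp, hjp, if_true, if_false]
        linarith
  · rintro ⟨h1, h2⟩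
    constructor
    · intro i
      have := h1 i
      by_cases hp : (i : ℕ) % 2 = 0
      · simpa only [hp, if_true] using this
      · simp only [hp, if_false] at this
        exact ⟨by linarith [this.2], by linarith [this.1]⟩
    · intro i j hij
      have hij2 := h2 i j hij
      by_cases hp : (i : ℕ) % 2 = 0
      · have hjp : ¬ ((j : ℕ) % 2 = 0) := by omega
        simp only [hp, hjp, if_true, if_false] at hij2
        linarith
      · have hjp : (j : ℕ) % 2 = 0 := by omega
        simp only [hp, hjp, if_true, if_false] at hij2
        linarith

lemma vol_Sset :
    volume (Sset m) = ((Finset.univ.filter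
        (fun σ : Equiv.Perm (Fin m) => AltChain (fun i => σ.symm i))).card : ENNReal)
      * ((Nat.factorial m : ENNReal))⁻¹ := by
  rw [Sset_eq_preimage,
    flipMap_preserving.measure_preimage measurableSet_Tset.nullMeasurableSet, vol_Tset]

lemma card_filter_symm (m : ℕ) :
    (Finset.univ.filter
      (fun σ : Equiv.Perm (Fin m) => AltChain (fun i => σ.symm i))).card = upDownCount m := by
  classical
  rw [upDownCount]
  refine Finset.card_bij' (fun σ _ => σ⁻¹) (fun σ _ => σ⁻¹) ?_ ?_ ?_ ?_
  · intro σ hσ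
    simp only [Finset.mem_filter, Finset.mem_univ, true_and] at hσ ⊢
    exact hσ
  · intro σ hσ
    simp only [Finset.mem_filter, Finset.mem_univ, true_and] at hσ ⊢
    intro i j hij
    have := hσ i j hij
    simpa [Equiv.Perm.inv_def] using this
  · intro σ _; simp
  · intro σ _; simp

/-- The cyclic set. -/
def Dset (m : ℕ) : Set (Fin (m+1) → ℝ) :=
  {x | (∀ i, x i ∈ Set.Icc (0:ℝ) 1) ∧ (∀ i, x 0 ≤ x i) ∧
    ∀ i, x i + x (finRotate (m+1) i) < 1}

lemma measurableSet_Dset (M : ℕ) : MeasurableSet (Dset M) := by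
  have h1 : MeasurableSet {x : Fin (M+1) → ℝ | ∀ i, x i ∈ Set.Icc (0:ℝ) 1} :=
    measurableSet_pointwise fun _ => measurableSet_Icc
  have h2 : MeasurableSet {x : Fin (M+1) → ℝ | ∀ i, x 0 ≤ x i} := by
    have : {x : Fin (M+1) → ℝ | ∀ i, x 0 ≤ x i} = ⋂ i, {x : Fin (M+1) → ℝ | x 0 ≤ x i} := by
      ext x; simp
    rw [this]
    exact MeasurableSet.iInter fun i =>
      measurableSet_le (measurable_pi_apply 0) (measurable_pi_apply i)
  have h3 : MeasurableSet {x : Fin (M+1) → ℝ | ∀ i, x i + x (finRotate (M+1) i) < 1} := by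
    have : {x : Fin (M+1) → ℝ | ∀ i, x i + x (finRotate (M+1) i) < 1}
        = ⋂ i, {x : Fin (M+1) → ℝ | x i + x (finRotate (M+1) i) < 1} := by
      ext x; simp
    rw [this]
    exact MeasurableSet.iInter fun i =>
      measurableSet_lt ((measurable_pi_apply i).add (measurable_pi_apply (finRotate (M+1) i))) measurable_const
  exact h1.inter (h2.inter h3)

lemma cons_mem_Dset_iff (k : ℕ) (t : ℝ) (x : Fin (k+1) → ℝ) :
    Fin.cons t x ∈ Dset (k+1) ↔
      ((t ∈ Set.Icc (0:ℝ) 1) ∧ (∀ j, x j ∈ Set.Icc (0:ℝ) 1) ∧ (∀ j, t ≤ x j) ∧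
        (t + x 0 < 1) ∧ (∀ i j : Fin (k+1), (j : ℕ) = (i : ℕ) + 1 → x i + x j < 1) ∧
        (x (Fin.last k) + t < 1)) := by
  have hone : (1 : Fin (k+2)) = Fin.succ 0 := (Fin.succ_zero_eq_one).symm
  constructor
  · rintro ⟨h1, h2, h3⟩
    refine ⟨?_, ?_, ?_, ?_, ?_, ?_⟩
    · simpa using h1 0
    · intro j; simpa using h1 j.succ
    · intro j
      have := h2 j.succ
      rwa [Fin.cons_zero, Fin.cons_succ] at this
    · have := h3 0
      rw [finRotate_succ_apply, zero_add, Fin.cons_zero, hone, Fin.cons_succ] at this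
      exact this
    · intro i j hij
      have hik : (i : ℕ) < k := by have := j.isLt; omega
      have := h3 i.succ
      rw [finRotate_succ_apply] at this
      have hne : i.succ ≠ Fin.last (k+1) := by
        intro hlast
        have := congrArg Fin.val hlast
        simp at this
        omega
      have hidx : (i.succ : Fin (k+2)) + 1 = j.succ := by
        apply Fin.ext
        rw [Fin.val_add_one]
        simp only [hne, if_false, Fin.val_succ]
        omega
      rw [hidx, Fin.cons_succ, Fin.cons_succ] at this
      exact this
    · have := h3 (Fin.last k).succ
      rw [finRotate_succ_apply] at this
      have hidx : ((Fin.last k).succ : Fin (k+2)) + 1 = 0 := by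
        rw [Fin.succ_last, Fin.last_add_one]
      rw [hidx, Fin.cons_succ, Fin.cons_zero] at this
      exact this
  · rintro ⟨h1, h2, h3, h4, h5, h6⟩
    refine ⟨?_, ?_, ?_⟩
    · intro i
      refine Fin.cases ?_ ?_ i
      · simpa using h1
      · intro j; simpa using h2 j
    · intro i
      refine Fin.cases ?_ ?_ i
      · simp
      · intro j
        rw [Fin.cons_zero, Fin.cons_succ]
        exact h3 j
    · intro i
      rw [finRotate_succ_apply]
      refine Fin.cases ?_ ?_ i
      · rw [zero_add, Fin.cons_zero, hone, Fin.cons_succ]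
        exact h4
      · intro j
        rcases eq_or_ne j (Fin.last k) with hj | hj
        · subst hj
          rw [Fin.cons_succ]
          have hidx : ((Fin.last k).succ : Fin (k+2)) + 1 = 0 := by
            rw [Fin.succ_last, Fin.last_add_one]
          rw [hidx, Fin.cons_zero]
          exact h6
        · have hjk : (j : ℕ) < k := by
            have h01 := j.isLt
            have : (j : ℕ) ≠ k := fun hh => hj (Fin.ext (by simp [hh]))
            omega
          have hne : j.succ ≠ Fin.last (k+1) := by
            intro hlast
            have := congrArg Fin.val hlast
            simp at this
            omega
          have hidx : (j.succ : Fin (k+2)) + 1 = (⟨(j : ℕ) + 1, by omega⟩ : Fin (k+1)).succ := by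
            apply Fin.ext
            rw [Fin.val_add_one]
            simp only [hne, if_false, Fin.val_succ]
          rw [Fin.cons_succ, hidx, Fin.cons_succ]
          exact h5 j ⟨(j : ℕ) + 1, by omega⟩ rfl

lemma slice_empty (k : ℕ) {t : ℝ} (ht : t ∉ Set.Ico (0:ℝ) 2⁻¹) :
    {x : Fin (k+1) → ℝ | Fin.cons t x ∈ Dset (k+1)} = ∅ := by
  ext x
  simp only [Set.mem_setOf_eq, Set.mem_empty_iff_false, iff_false]
  intro hx
  rw [cons_mem_Dset_iff] at hx
  obtain ⟨h1, _, h3, h4, _, _⟩ := hx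
  exact ht ⟨h1.1, by have := h3 0; linarith⟩

open Pointwise in
lemma vol_affine_image (M : ℕ) (t : ℝ) (ht : 0 ≤ 1 - 2*t) (s : Set (Fin M → ℝ)) :
    volume ((fun z : Fin M → ℝ => (fun _ => t) + (1-2*t) • z) '' s)
      = ENNReal.ofReal ((1-2*t)^M) * volume s := by
  rw [show (fun z : Fin M → ℝ => (fun _ => t) + (1-2*t) • z) '' s
      = (fun _ : Fin M => t) +ᵥ ((1-2*t) • s) by
    rw [← Set.image_smul, ← Set.image_vadd, Set.image_image]; rfl]
  rw [measure_vadd, Measure.addHaar_smul_of_nonneg volume ht, Module.finrank_pi, Fintype.card_fin]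

lemma slice_eq (k : ℕ) {t : ℝ} (ht : t ∈ Set.Ico (0:ℝ) 2⁻¹) :
    {x : Fin (k+1) → ℝ | Fin.cons t x ∈ Dset (k+1)} =
      (fun z : Fin (k+1) → ℝ => (fun _ => t) + (1-2*t) • z) '' Sset (k+1) := by
  have h0 : (0:ℝ) ≤ t := ht.1
  have hhalf : t < 2⁻¹ := ht.2
  have hpos : (0:ℝ) < 1 - 2*t := by
    have : (2:ℝ) * t < 2 * 2⁻¹ := by linarith
    norm_num at this
    linarith
  ext x
  simp only [Set.mem_setOf_eq, Set.mem_image, cons_mem_Dset_iff]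
  constructor
  · rintro ⟨h1, h2, h3, h4, h5, h6⟩
    refine ⟨fun i => (x i - t)/(1-2*t), ⟨fun i => ⟨?_, ?_⟩, fun i j hij => ?_⟩, ?_⟩
    · exact div_nonneg (by linarith [h3 i]) hpos.le
    · rw [div_lt_one hpos]
      rcases eq_or_ne i (Fin.last k) with hi | hi
      · subst hi; linarith
      · have hik : (i : ℕ) < k := by
          have h01 := i.isLt
          have : (i : ℕ) ≠ k := fun hh => hi (Fin.ext (by simp [hh]))
          omega
        have ha := h5 i ⟨(i : ℕ) + 1, by omega⟩ rfl
        have hb := h3 ⟨(i : ℕ) + 1, by omega⟩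
        linarith
    · rw [← add_div, div_lt_one hpos]
      have := h5 i j hij
      linarith
    · funext i
      simp only [Pi.add_apply, Pi.smul_apply, smul_eq_mul]
      rw [mul_div_cancel₀ _ hpos.ne']
      ring
  · rintro ⟨z, ⟨hz1, hz2⟩, rfl⟩
    have hb : ∀ i, 0 ≤ z i ∧ z i < 1 := fun i => hz1 i
    have happ : ∀ i, ((fun _ : Fin (k+1) => t) + (1-2*t) • z) i = t + (1-2*t) * z i := by
      intro i; simp [Pi.add_apply, Pi.smul_apply, smul_eq_mul]
    refine ⟨⟨h0, by linarith⟩, fun j => ?_, fun j => ?_, ?_, fun i j hij => ?_, ?_⟩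
    · rw [happ]
      constructor
      · nlinarith [(hb j).1]
      · nlinarith [(hb j).2]
    · rw [happ]; nlinarith [(hb j).1]
    · rw [happ]; nlinarith [(hb 0).2]
    · rw [happ, happ]
      have := hz2 i j hij
      nlinarith
    · rw [happ]; nlinarith [(hb (Fin.last k)).2]

lemma lint_slice (p : ℕ) :
    ∫⁻ t in Set.Ico (0:ℝ) 2⁻¹, ENNReal.ofReal ((1-2*t)^p)
      = ENNReal.ofReal ((2*((p:ℝ)+1))⁻¹) := by
  have hcont : Continuous fun t : ℝ => (1-2*t)^p :=
    (continuous_const.sub (continuous_const.mul continuous_id)).pow p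
  rw [← ofReal_integral_eq_lintegral_ofReal]
  · congr 1
    have h1 : ∫ t in Set.Ico (0:ℝ) 2⁻¹, (1-2*t)^p = ∫ t in (0:ℝ)..2⁻¹, (1-2*t)^p := by
      rw [intervalIntegral.integral_of_le (by norm_num : (0:ℝ) ≤ 2⁻¹)]
      exact setIntegral_congr_set Ico_ae_eq_Ioc
    rw [h1]
    have hp1 : ((p:ℝ) + 1) ≠ 0 := by positivity
    have hderiv : ∀ u ∈ Set.uIcc (0:ℝ) 2⁻¹,
        HasDerivAt (fun y : ℝ => (1-2*y)^(p+1) * (-(1:ℝ)/(2*((p:ℝ)+1)))) ((1-2*u)^p) u := by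
      intro u _
      have hd1 : HasDerivAt (fun y : ℝ => 1-2*y) (-2) u := by
        simpa using ((hasDerivAt_id u).const_mul (2:ℝ)).const_sub 1
      have hd2 := (hd1.pow (p+1)).mul_const (-(1:ℝ)/(2*((p:ℝ)+1)))
      refine hd2.congr_deriv ?_
      push_cast
      field_simp
    rw [intervalIntegral.integral_eq_sub_of_hasDerivAt hderiv (hcont.intervalIntegrable _ _)]
    have hz : (1 - 2*(2:ℝ)⁻¹) = 0 := by norm_num
    rw [hz, zero_pow (Nat.succ_ne_zero p)]
    norm_num
    rw [div_eq_mul_inv, mul_inv]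
    ring
  · exact (hcont.integrableOn_Icc).mono_set Set.Ico_subset_Icc_self
  · refine (ae_restrict_iff' measurableSet_Ico).mpr (Filter.Eventually.of_forall fun u hu => ?_)
    rw [Set.mem_Ico] at hu
    have h2 : (2:ℝ) * u < 1 := by
      have : (2:ℝ) * u < 2 * 2⁻¹ := by linarith [hu.2]
      norm_num at this
      linarith
    have h3 : (0:ℝ) ≤ 1 - 2*u := by linarith
    positivity

theorem vol_Dn_star (n : ℕ) (hn : 3 ≤ n) :
    volume {x : Fin n → ℝ |
        (∀ i, x i ∈ Set.Icc (0:ℝ) 1) ∧ (∀ i, x ⟨0, by omega⟩ ≤ x i) ∧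
        ∀ i, x i + x (finRotate n i) < 1}
      = (upDownCount (n - 1) : ENNReal) /
          ((2 * n * Nat.factorial (n - 1) : ℕ) : ENNReal) := by
  obtain ⟨k, rfl⟩ : ∃ k, n = k + 2 := ⟨n - 2, by omega⟩
  have hzero : (⟨0, by omega⟩ : Fin (k+2)) = 0 := Fin.mk_zero
  have hset : {x : Fin (k+2) → ℝ |
        (∀ i, x i ∈ Set.Icc (0:ℝ) 1) ∧ (∀ i, x ⟨0, by omega⟩ ≤ x i) ∧
        ∀ i, x i + x (finRotate (k+2) i) < 1} = Dset (k+1) := by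
    ext x
    rw [Dset, Set.mem_setOf_eq, Set.mem_setOf_eq, hzero]
  rw [hset]
  have hmeas := measurableSet_Dset (k+1)
  set e := MeasurableEquiv.piFinSuccAbove (fun _ : Fin (k+2) => ℝ) 0 with he
  have hmp := (volume_preserving_piFinSuccAbove (fun _ : Fin (k+2) => ℝ) 0).symm e
  have h1 : volume (Dset (k+1)) = volume (e.symm ⁻¹' Dset (k+1)) :=
    (hmp.measure_preimage hmeas.nullMeasurableSet).symm
  rw [h1, Measure.volume_eq_prod, Measure.prod_apply (e.symm.measurable hmeas)]
  have hfiber : ∀ t : ℝ, (Prod.mk t ⁻¹' (e.symm ⁻¹' Dset (k+1)))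
      = {x : Fin (k+1) → ℝ | Fin.cons t x ∈ Dset (k+1)} := by
    intro t; ext x
    simp only [Set.mem_preimage, Set.mem_setOf_eq]
    have hes : e.symm (t, x) = Fin.cons t x := by
      rw [he]
      simp [MeasurableEquiv.piFinSuccAbove_symm_apply, Fin.insertNthEquiv, Fin.insertNth_zero]
    rw [hes]
  have hvol : ∀ t : ℝ, volume (Prod.mk t ⁻¹' (e.symm ⁻¹' Dset (k+1)))
      = Set.indicator (Set.Ico (0:ℝ) 2⁻¹)
          (fun t => ENNReal.ofReal ((1-2*t)^(k+1)) * volume (Sset (k+1))) t := by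
    intro t
    rw [hfiber t]
    by_cases ht : t ∈ Set.Ico (0:ℝ) 2⁻¹
    · have h2t : (0:ℝ) ≤ 1 - 2*t := by
        have h := ht.2
        have : (2:ℝ) * t < 2 * 2⁻¹ := by linarith
        norm_num at this
        linarith
      rw [Set.indicator_of_mem ht, slice_eq k ht, vol_affine_image (k+1) t h2t]
    · rw [Set.indicator_of_notMem ht, slice_empty k ht, measure_empty]
  have hmf : Measurable fun t : ℝ => ENNReal.ofReal ((1-2*t)^(k+1)) := by
    apply Measurable.ennreal_ofReal
    fun_prop
  rw [lintegral_congr hvol, lintegral_indicator measurableSet_Ico,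
    lintegral_mul_const _ hmf, lint_slice (k+1), vol_Sset, card_filter_symm]
  have hup : (k + 2) - 1 = k + 1 := rfl
  rw [hup]
  have hofReal : ENNReal.ofReal ((2*(((k:ℝ)+1)+1))⁻¹) = (((2*(k+2) : ℕ)) : ENNReal)⁻¹ := by
    rw [ENNReal.ofReal_inv_of_pos (by positivity)]
    rw [show ((2:ℝ)*(((k:ℝ)+1)+1)) = ((2*(k+2) : ℕ) : ℝ) by push_cast; ring]
    rw [ENNReal.ofReal_natCast]
  rw [show (((k+1:ℕ):ℝ)+1) = (((k:ℝ)+1)+1) by push_cast; ring] at *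
  rw [hofReal]
  have ha0 : ((2*(k+2) : ℕ) : ENNReal) ≠ 0 := by
    simp
  have hatop : ((2*(k+2) : ℕ) : ENNReal) ≠ ⊤ := ENNReal.natCast_ne_top _
  rw [div_eq_mul_inv]
  have hcast : ((2 * (k + 2) * Nat.factorial (k+1) : ℕ) : ENNReal)
      = ((2*(k+2) : ℕ) : ENNReal) * ((Nat.factorial (k+1) : ℕ) : ENNReal) := by
    push_cast; ring
  rw [hcast, ENNReal.mul_inv (Or.inl ha0) (Or.inl hatop)]
  push_cast
  ring
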